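/- arXiv:2504.01206 — 9 statements merged into one kernel-verified Lean document; each statement's English description precedes it below -/
import Mathlib

section
/- Let P be a real polynomial of degree at most 3 such that P(0) = 0, P(1) = 1, and P is monotone non-decreasing on the closed interval [0,1]. Then 1/2 - √3/4 ≤ P(1/2) ≤ 1/2 + √3/4. -/
/-!
For a cubic `P` the value `P(1/2)` equals
`(P(0) + P(1))/2 ∓ (√3/4)(P(1) - P(0)) ± (√3/4) P'(1/2 ∓ √3/6)`, the points `1/2 ∓ √3/6` being the nodes of the two-point Gauss–Legendre rule on `[0, 1]`.
With `P(0) = 0` and `P(1) = 1`, monotonicity makes `P'` nonnegative at both nodes, which gives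
the two bounds.
-/

open Polynomial Set

namespace Polynomial

theorem eval_eq_of_natDegree_le_three {P : ℝ[X]} (hP : P.natDegree ≤ 3) (x : ℝ) :
    P.eval x = P.coeff 0 + P.coeff 1 * x + P.coeff 2 * x ^ 2 + P.coeff 3 * x ^ 3 := by
  rw [eval_eq_sum_range' (by omega : P.natDegree < 4)]
  simp only [Finset.sum_range_succ, Finset.sum_range_zero]
  ring

/-- Each sign `t = ±√3` gives one node `1/2 - t/6` of the two-point Gauss–Legendre rule. -/
theorem eval_half_eq_of_natDegree_le_three {P : ℝ[X]} (hP : P.natDegree ≤ 3) {t : ℝ}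
    (ht : t ^ 2 = 3) :
    P.eval (1 / 2) = (P.eval 0 + P.eval 1) / 2 - t / 4 * (P.eval 1 - P.eval 0)
      + t / 4 * P.derivative.eval (1 / 2 - t / 6) := by
  have hP' : P.derivative.natDegree ≤ 3 := (natDegree_derivative_le P).trans (by omega)
  have hc4 : P.coeff 4 = 0 := coeff_eq_zero_of_natDegree_lt (by omega)
  simp only [eval_eq_of_natDegree_le_three hP, eval_eq_of_natDegree_le_three hP',
    coeff_derivative, hc4]
  push_cast
  linear_combination (P.coeff 2 / 12 + P.coeff 3 * (6 - t) / 48) * ht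

end Polynomial

/-- A real polynomial of degree at most 3 with P(0)=0, P(1)=1,
monotone non-decreasing on [0,1], satisfies 1/2 - √3/4 ≤ P(1/2) ≤ 1/2 + √3/4. -/
theorem stmt_0 (P : Polynomial ℝ) (hdeg : P.degree ≤ 3)
    (h0 : P.eval 0 = 0) (h1 : P.eval 1 = 1)
    (hmono : MonotoneOn (fun x => P.eval x) (Set.Icc (0 : ℝ) 1)) :
    1 / 2 - Real.sqrt 3 / 4 ≤ P.eval (1 / 2) ∧
      P.eval (1 / 2) ≤ 1 / 2 + Real.sqrt 3 / 4 := by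
  have hP : P.natDegree ≤ 3 := natDegree_le_iff_degree_le.mpr hdeg
  have hs : Real.sqrt 3 ^ 2 = 3 := Real.sq_sqrt (by norm_num)
  have hs_pos : 0 < Real.sqrt 3 := by positivity
  have hs_lt : Real.sqrt 3 < 3 := by nlinarith
  have hderiv : ∀ x ∈ Icc (0 : ℝ) 1, 0 ≤ P.derivative.eval x := fun x hx =>
    (P.hasDerivAt x).hasDerivWithinAt.nonneg_of_monotoneOn
      (uniqueDiffOn_Icc one_pos x hx).accPt hmono
  have hleft := hderiv (1 / 2 - Real.sqrt 3 / 6) ⟨by linarith, by linarith⟩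
  have hright := hderiv (1 / 2 - -Real.sqrt 3 / 6) ⟨by linarith, by linarith⟩
  have hlower := eval_half_eq_of_natDegree_le_three hP hs
  have hupper := eval_half_eq_of_natDegree_le_three hP (t := -Real.sqrt 3) (by rw [neg_sq, hs])
  rw [h0, h1] at hlower hupper
  constructor
  · nlinarith [mul_nonneg hs_pos.le hleft]
  · nlinarith [mul_nonneg hs_pos.le hright]
end

section
/- Let P be a real polynomial of degree at most 3 such that P(0) = 0, P(1) = 1, and P is monotone non-decreasing on the closed interval [0,1]. Then P(1/2) ≤ 1/2 + √3/4. -/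
/-!
For cubics, `P(1/2)` is determined by `P(0)`, `P(1)` and the single derivative value `P'(r)` at
`r = (3 + √3)/6`: `P(1/2) = (P(0) + P(1))/2 + (√3/4)(P(1) - P(0) - P'(r))`. Monotonicity gives
`P'(r) ≥ 0`, whence the bound; it is attained by the cubic with `P' = c (x - r)²`.
-/

open Polynomial Topology

theorem MonotoneOn.deriv_nonneg_of_mem_nhds {f : ℝ → ℝ} {s : Set ℝ} {x : ℝ}
    (hf : MonotoneOn f s) (hs : s ∈ 𝓝 x) : 0 ≤ deriv f x :=
  derivWithin_of_mem_nhds (f := f) hs ▸ hf.derivWithin_nonneg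

theorem Polynomial.eval_half_eq_of_natDegree_le_three_s1 {P : ℝ[X]} (hP : P.natDegree ≤ 3) :
    P.eval (1 / 2) = (P.eval 0 + P.eval 1) / 2
      + √3 / 4 * (P.eval 1 - P.eval 0 - P.derivative.eval ((3 + √3) / 6)) := by
  have h3 : √3 ^ 2 = 3 := Real.sq_sqrt (by norm_num)
  rw [P.as_sum_range_C_mul_X_pow' (Nat.lt_succ_of_le hP)]
  simp only [Finset.sum_range_succ, Finset.sum_range_zero, eval_add, eval_mul, eval_C, eval_pow,
    eval_X, derivative_add, derivative_C_mul_X_pow, zero_add]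
  linear_combination (P.coeff 2 / 12 + P.coeff 3 / 8 + P.coeff 3 * √3 / 48) * h3

/-- upper bound P(1/2) ≤ 1/2 + √3/4. -/
theorem stmt_1 (P : Polynomial ℝ) (hdeg : P.degree ≤ 3)
    (h0 : P.eval 0 = 0) (h1 : P.eval 1 = 1)
    (hmono : MonotoneOn (fun x => P.eval x) (Set.Icc (0 : ℝ) 1)) :
    P.eval (1 / 2) ≤ 1 / 2 + Real.sqrt 3 / 4 := by
  have hr : Set.Icc (0 : ℝ) 1 ∈ 𝓝 ((3 + √3) / 6) := by
    have h3 : √3 < 3 := by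
      rw [Real.sqrt_lt' (by norm_num)]; norm_num
    exact Icc_mem_nhds (by positivity) (by linarith)
  have hderiv : 0 ≤ P.derivative.eval ((3 + √3) / 6) :=
    P.deriv ▸ hmono.deriv_nonneg_of_mem_nhds hr
  rw [P.eval_half_eq_of_natDegree_le_three_s1 (natDegree_le_iff_degree_le.mpr hdeg), h0, h1]
  nlinarith [Real.sqrt_nonneg 3]
end

section
/- Let P be a real polynomial of degree at most 3 such that P(0) = 0, P(1) = 1, and P is monotone non-decreasing on the closed interval [0,1]. Then P(1/2) ≥ 1/2 - √3/4. -/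
open Filter Set Topology

/-- If f is monotone on [0,1] and differentiable at an interior point, the derivative is ≥ 0. -/
lemma deriv_nonneg_of_monotoneOn {f : ℝ → ℝ} {t d : ℝ}
    (hmono : MonotoneOn f (Set.Icc (0 : ℝ) 1)) (ht0 : 0 ≤ t) (ht1 : t < 1)
    (hd : HasDerivAt f d t) : 0 ≤ d := by
  have hslope : Tendsto (slope f t) (𝓝[>] t) (𝓝 d) :=
    (hasDerivAt_iff_tendsto_slope.mp hd).mono_left
      (nhdsWithin_mono _ (fun x hx => ne_of_gt hx))
  refine ge_of_tendsto hslope ?_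
  filter_upwards [Ioo_mem_nhdsGT_of_mem (Set.mem_Ico.mpr ⟨le_refl t, ht1⟩)] with x hx
  have hxt : t < x := hx.1
  have hfx : f t ≤ f x :=
    hmono ⟨ht0, ht1.le⟩ ⟨ht0.trans hxt.le, hx.2.le⟩ hxt.le
  rw [slope_def_field]
  exact div_nonneg (by linarith) (by linarith)

/-- lower bound P(1/2) ≥ 1/2 - √3/4. -/
theorem stmt_2 (P : Polynomial ℝ) (hdeg : P.degree ≤ 3)
    (h0 : P.eval 0 = 0) (h1 : P.eval 1 = 1)
    (hmono : MonotoneOn (fun x => P.eval x) (Set.Icc (0 : ℝ) 1)) :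
    1 / 2 - Real.sqrt 3 / 4 ≤ P.eval (1 / 2) := by
  set s := Real.sqrt 3 with hs
  have hs0 : 0 ≤ s := Real.sqrt_nonneg 3
  have hs2 : s ^ 2 = 3 := Real.sq_sqrt (by norm_num)
  have hs3 : s < 3 := by nlinarith
  have ht0 : 0 ≤ (3 - s) / 6 := by linarith
  have ht1 : (3 - s) / 6 < 1 := by linarith
  -- coefficients
  have hnd : P.natDegree ≤ 3 := Polynomial.natDegree_le_iff_degree_le.mpr hdeg
  have heval : ∀ x : ℝ, P.eval x = ∑ i ∈ Finset.range 4, P.coeff i * x ^ i := by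
    intro x
    exact Polynomial.eval_eq_sum_range' (lt_of_le_of_lt hnd (by norm_num)) x
  set a := P.coeff 1
  set b := P.coeff 2
  set c := P.coeff 3
  have hc0 : P.coeff 0 = 0 := by rw [Polynomial.coeff_zero_eq_eval_zero, h0]
  have hsum : a + b + c = 1 := by
    have := heval 1
    rw [h1] at this
    simp [Finset.sum_range_succ, hc0] at this
    linarith
  have hderiv : 0 ≤ a + 2 * b * ((3 - s) / 6) + 3 * c * ((3 - s) / 6) ^ 2 := by
    have hd : HasDerivAt (fun x => P.eval x)
        (a + 2 * b * ((3 - s) / 6) + 3 * c * ((3 - s) / 6) ^ 2) ((3 - s) / 6) := by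
      have h := P.hasDerivAt ((3 - s) / 6)
      have heq : Polynomial.eval ((3 - s) / 6) (Polynomial.derivative P)
          = a + 2 * b * ((3 - s) / 6) + 3 * c * ((3 - s) / 6) ^ 2 := by
        have hnd' : (Polynomial.derivative P).natDegree < 3 :=
          lt_of_le_of_lt (Polynomial.natDegree_derivative_le P) (by omega)
        rw [Polynomial.eval_eq_sum_range' hnd' _]
        simp [Finset.sum_range_succ, Polynomial.coeff_derivative]
        ring
      rwa [heq] at h
    exact deriv_nonneg_of_monotoneOn hmono ht0 ht1 hd
  have h9 : ((3 - s) / 6) ^ 2 = (2 - s) / 6 := by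
    field_simp
    nlinarith [hs2]
  rw [h9] at hderiv
  have hkey : 0 ≤ a + b * (3 - s) / 3 + c * (2 - s) / 2 := by linarith
  have hhalf : P.eval (1/2) = a / 2 + b / 4 + c / 8 := by
    rw [heval (1/2)]
    simp [Finset.sum_range_succ, hc0]
    ring
  rw [hhalf]
  have hid : a / 2 + b / 4 + c / 8 - (1 / 2 - s / 4) * (a + b + c)
      = (s / 4) * (a + b * (3 - s) / 3 + c * (2 - s) / 2) := by
    linear_combination (b / 12 + c / 8) * hs2
  rw [hsum, mul_one] at hid
  nlinarith [mul_nonneg (show (0:ℝ) ≤ s / 4 by linarith) hkey]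
end

section
/- Let a, b, c be real numbers with a + b + c = 1 and suppose the polynomial P(x) = a x³ + b x² + c x is monotone non-decreasing on the closed interval [0,1]. Then -√3/3 ≤ a/2 + b/3 ≤ √3/3. -/
/-!
The derivative `P' x = 3 a x² + 2 b x + c` takes the values `1 ± √3 (a/2 + b/3)` at the
Gauss–Legendre nodes `(3 ± √3)/6` of `[0, 1]`; both nodes are interior points, so monotonicity
makes both values nonnegative.
-/

open Filter Topology

lemma MonotoneOn.nonneg_of_hasDerivAt {f : ℝ → ℝ} {s : Set ℝ} {x f' : ℝ} (hf : MonotoneOn f s)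
    (hs : s ∈ 𝓝 x) (hd : HasDerivAt f f' x) : 0 ≤ f' :=
  hd.hasDerivWithinAt.nonneg_of_monotoneOn
    (accPt_iff_frequently_nhdsNE.2 (eventually_nhdsWithin_of_eventually_nhds hs).frequently) hf

lemma hasDerivAt_cubic (a b c x : ℝ) :
    HasDerivAt (fun x : ℝ => a * x ^ 3 + b * x ^ 2 + c * x) (3 * a * x ^ 2 + 2 * b * x + c) x :=
  ((((hasDerivAt_pow 3 x).const_mul a).add ((hasDerivAt_pow 2 x).const_mul b)).add
    ((hasDerivAt_id' x).const_mul c)).congr_deriv (by norm_num; ring)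

lemma gaussNode_mem_Ioo {ε : ℝ} (hε : ε ^ 2 = 1) : (3 + ε * √3) / 6 ∈ Set.Ioo (0 : ℝ) 1 := by
  have h3 : √3 ^ 2 = 3 := Real.sq_sqrt (by norm_num)
  have hsq : (ε * √3) ^ 2 < 3 ^ 2 := by rw [mul_pow, hε, h3]; norm_num
  obtain ⟨hlow, hhigh⟩ := abs_lt_of_sq_lt_sq' hsq (by norm_num)
  constructor <;> linarith

lemma cubic_deriv_at_gaussNode {a b c ε : ℝ} (habc : a + b + c = 1) (hε : ε ^ 2 = 1) :
    3 * a * ((3 + ε * √3) / 6) ^ 2 + 2 * b * ((3 + ε * √3) / 6) + c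
      = 1 + ε * √3 * (a / 2 + b / 3) := by
  have h3 : √3 ^ 2 = 3 := Real.sq_sqrt (by norm_num)
  linear_combination (a / 12 * ε ^ 2) * h3 + (a / 4) * hε + habc

/-- if a+b+c = 1 and P(x) = a x³ + b x² + c x is monotone
non-decreasing on [0,1], then -√3/3 ≤ a/2 + b/3 ≤ √3/3. -/
theorem stmt_5 (a b c : ℝ) (habc : a + b + c = 1)
    (hmono : MonotoneOn (fun x : ℝ => a * x ^ 3 + b * x ^ 2 + c * x)
      (Set.Icc (0 : ℝ) 1)) :
    -(Real.sqrt 3 / 3) ≤ a / 2 + b / 3 ∧ a / 2 + b / 3 ≤ Real.sqrt 3 / 3 := by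
  have bound_at_node {ε : ℝ} (hε : ε ^ 2 = 1) : 0 ≤ √3 / 3 + ε * (a / 2 + b / 3) := by
    obtain ⟨h0, h1⟩ := gaussNode_mem_Ioo hε
    have hderiv := hmono.nonneg_of_hasDerivAt (Icc_mem_nhds h0 h1) (hasDerivAt_cubic a b c _)
    rw [cubic_deriv_at_gaussNode habc hε] at hderiv
    have h3 : √3 ^ 2 = 3 := Real.sq_sqrt (by norm_num)
    calc 0 ≤ √3 / 3 * (1 + ε * √3 * (a / 2 + b / 3)) := mul_nonneg (by positivity) hderiv
      _ = √3 / 3 + ε * (a / 2 + b / 3) := by linear_combination (ε * (a / 2 + b / 3) / 3) * h3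
  have hplus := bound_at_node (ε := 1) (by norm_num)
  have hminus := bound_at_node (ε := -1) (by norm_num)
  constructor <;> linarith
end

section
/- Let a, b, c be real numbers with a + b + c = 1 such that 3aλ² + 2bλ + c ≥ 0 for every λ ∈ [0,1]. Then a/8 + b/4 + c/2 ≤ 1/2 + √3/4. -/
/-!
Evaluate at `x = (3 + √3) / 6 ∈ [0, 1]`. Being a root of `6x² - 6x + 1`, this `x` makes
`a/8 + b/4 + c/2 - (1/2 + √3/4)(a + b + c)` a negative multiple of `3ax² + 2bx + c`.
-/

open Real

lemma three_add_sqrt_three_div_six_mem_Icc : (3 + √3) / 6 ∈ Set.Icc (0 : ℝ) 1 := by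
  have h : √3 ≤ 3 := by
    rw [sqrt_le_left (by norm_num)]
    norm_num
  constructor <;> linarith [sqrt_nonneg 3]

lemma div_eight_add_div_four_add_div_two_eq (a b c : ℝ) :
    a / 8 + b / 4 + c / 2 = (1 / 2 + √3 / 4) * (a + b + c)
      - √3 / 4 * (3 * a * ((3 + √3) / 6) ^ 2 + 2 * b * ((3 + √3) / 6) + c) := by
  linear_combination (a * (√3 + 6) / 48 + b / 12) * sq_sqrt (show (0 : ℝ) ≤ 3 by norm_num)

/-- if a+b+c = 1 and 3aλ² + 2bλ + c ≥ 0 on [0,1],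
then a/8 + b/4 + c/2 ≤ 1/2 + √3/4. -/
theorem stmt_6 (a b c : ℝ) (habc : a + b + c = 1)
    (hpos : ∀ l ∈ Set.Icc (0 : ℝ) 1, 3 * a * l ^ 2 + 2 * b * l + c ≥ 0) :
    a / 8 + b / 4 + c / 2 ≤ 1 / 2 + Real.sqrt 3 / 4 := by
  have hx := hpos _ three_add_sqrt_three_div_six_mem_Icc
  rw [div_eight_add_div_four_add_div_two_eq, habc, mul_one]
  linarith [mul_nonneg (by positivity : (0 : ℝ) ≤ √3 / 4) hx]
end

section
/- Let a, b, c be real numbers with a + b + c = 1 such that 3aλ² + 2bλ + c ≥ 0 for every λ ∈ [0,1]. Then a/8 + b/4 + c/2 ≥ 1/2 - √3/4. -/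
/-! With `F λ = aλ³ + bλ² + cλ`, the hypothesis says `F' ≥ 0` on `[0,1]`, `F 1 = 1`, and the claim
is a bound on `F (1/2)`. Every such cubic satisfies the exact identity
`F (1/2) = (1/2 - √3/4) F 1 + (√3/4) F' λ₀` at the node `λ₀ = (3 - √3)/6 ∈ [0,1]`,
so the bound follows from `F' λ₀ ≥ 0` alone. -/

open Real

lemma three_sub_sqrt_three_div_six_mem_Icc : (3 - √3) / 6 ∈ Set.Icc (0 : ℝ) 1 := by
  have h3 : √3 ^ 2 = 3 := sq_sqrt (by norm_num)
  have hle : √3 ≤ 3 := by nlinarith [sqrt_nonneg 3]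
  constructor <;> linarith [sqrt_nonneg 3]

lemma cubic_half_eq_quadrature (a b c : ℝ) :
    a / 8 + b / 4 + c / 2 = (1 / 2 - √3 / 4) * (a + b + c)
      + √3 / 4 * (3 * a * ((3 - √3) / 6) ^ 2 + 2 * b * ((3 - √3) / 6) + c) := by
  have h3 : √3 ^ 2 = 3 := sq_sqrt (by norm_num)
  linear_combination (-(a * √3) / 48 + a / 8 + b / 12) * h3

/-- if a+b+c = 1 and 3aλ² + 2bλ + c ≥ 0 on [0,1],
then a/8 + b/4 + c/2 ≥ 1/2 - √3/4. -/
theorem stmt_7 (a b c : ℝ) (habc : a + b + c = 1)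
    (hpos : ∀ l ∈ Set.Icc (0 : ℝ) 1, 3 * a * l ^ 2 + 2 * b * l + c ≥ 0) :
    a / 8 + b / 4 + c / 2 ≥ 1 / 2 - Real.sqrt 3 / 4 := by
  have hnode := hpos _ three_sub_sqrt_three_div_six_mem_Icc
  rw [cubic_half_eq_quadrature, habc]
  have : 0 ≤ √3 / 4 * (3 * a * ((3 - √3) / 6) ^ 2 + 2 * b * ((3 - √3) / 6) + c) := by positivity
  linarith
end

section
/- Let x₀ < x₁ and y₀ ≤ y₁ be real numbers, let β = 1/2 - √3/4, let m = (x₀ + x₁)/2, and let P be a real polynomial of degree at most 3 that is monotone non-decreasing on the closed interval [x₀, x₁] with P(x₀) = y₀ and P(x₁) = y₁. Then both P(m) - y₀ ≤ (1 - β)·(y₁ - y₀) and y₁ - P(m) ≤ (1 - β)·(y₁ - y₀); that is, splitting the interval at its midpoint divides the total mass y₁ - y₀ into two parts, each smaller than the original by at least the factor 1 - β. -/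
/-!
Write `h = (x₁ - x₀) / 2`. For a cubic `P`, two-point Gauss–Legendre quadrature is exact for the
quadratic `P'`, and comparing it with the increment of `P` over each half interval gives
`P(m) - P(m - h) - β (P(m + h) - P(m - h)) = (√3 / 2) h P'(m - h / √3)`, and symmetrically for the
right half with the node `m + h / √3`. The Gauss nodes `m ± h / √3` lie inside `(x₀, x₁)`, where
monotonicity forces `P' ≥ 0`; so each half carries at least a `β` fraction of the mass, and hence
the other half at most `1 - β`.
-/

open Polynomial Set

lemma Polynomial.derivative_eval_nonneg_of_monotoneOn {P : ℝ[X]} {a b x : ℝ}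
    (hP : MonotoneOn (fun x => P.eval x) (Icc a b)) (hx : x ∈ Ioo a b) :
    0 ≤ P.derivative.eval x := by
  rw [← P.deriv, ← derivWithin_of_mem_nhds (Icc_mem_nhds hx.1 hx.2)]
  exact hP.derivWithin_nonneg

lemma Polynomial.eval_eq_of_natDegree_le_three_s9 {R : Type*} [CommSemiring R] {P : R[X]}
    (hP : P.natDegree ≤ 3) (x : R) :
    P.eval x = P.coeff 0 + P.coeff 1 * x + P.coeff 2 * x ^ 2 + P.coeff 3 * x ^ 3 := by
  rw [eval_eq_sum_range' (Nat.lt_succ_of_le hP)]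
  simp [Finset.sum_range_succ]

lemma Polynomial.derivative_eval_eq_of_natDegree_le_three {R : Type*} [CommSemiring R]
    {P : R[X]} (hP : P.natDegree ≤ 3) (x : R) :
    P.derivative.eval x = P.coeff 1 + 2 * P.coeff 2 * x + 3 * P.coeff 3 * x ^ 2 := by
  rw [eval_eq_sum_range' (n := 3) (by have := natDegree_derivative_le P; omega)]
  simp [Finset.sum_range_succ, coeff_derivative]
  ring

lemma div_sqrt_three (h : ℝ) : h / √3 = h * √3 / 3 := by
  rw [div_eq_iff (by positivity)]
  linear_combination (-h / 3) * Real.sq_sqrt (show (0 : ℝ) ≤ 3 by norm_num)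

lemma Polynomial.left_half_increment_eq_of_natDegree_le_three {P : ℝ[X]}
    (hP : P.natDegree ≤ 3) (m h : ℝ) :
    P.eval m - P.eval (m - h) - (1 / 2 - √3 / 4) * (P.eval (m + h) - P.eval (m - h)) =
      √3 / 2 * h * P.derivative.eval (m - h / √3) := by
  rw [div_sqrt_three]
  simp only [eval_eq_of_natDegree_le_three_s9 hP, derivative_eval_eq_of_natDegree_le_three hP]
  linear_combination (h * (P.coeff 2 * h / 3 + P.coeff 3 * (m * h - √3 * h ^ 2 / 6))) *
    Real.sq_sqrt (show (0 : ℝ) ≤ 3 by norm_num)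

lemma Polynomial.right_half_increment_eq_of_natDegree_le_three {P : ℝ[X]}
    (hP : P.natDegree ≤ 3) (m h : ℝ) :
    P.eval (m + h) - P.eval m - (1 / 2 - √3 / 4) * (P.eval (m + h) - P.eval (m - h)) =
      √3 / 2 * h * P.derivative.eval (m + h / √3) := by
  rw [div_sqrt_three]
  simp only [eval_eq_of_natDegree_le_three_s9 hP, derivative_eval_eq_of_natDegree_le_three hP]
  linear_combination (-h * (P.coeff 2 * h / 3 + P.coeff 3 * (m * h + √3 * h ^ 2 / 6))) *
    Real.sq_sqrt (show (0 : ℝ) ≤ 3 by norm_num)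

theorem stmt_9_general (x₀ x₁ y₀ y₁ : ℝ) (hx : x₀ < x₁)
    (β : ℝ) (hβ : β = 1 / 2 - Real.sqrt 3 / 4)
    (m : ℝ) (hm : m = (x₀ + x₁) / 2)
    (P : Polynomial ℝ) (hdeg : P.degree ≤ 3)
    (h0 : P.eval x₀ = y₀) (h1 : P.eval x₁ = y₁)
    (hmono : MonotoneOn (fun x => P.eval x) (Set.Icc x₀ x₁)) :
    P.eval m - y₀ ≤ (1 - β) * (y₁ - y₀) ∧
      y₁ - P.eval m ≤ (1 - β) * (y₁ - y₀) := by
  have hP : P.natDegree ≤ 3 := natDegree_le_iff_degree_le.2 hdeg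
  set h := (x₁ - x₀) / 2 with h_def
  have hh : 0 < h := by linarith
  have hx₀ : x₀ = m - h := by linarith
  have hx₁ : x₁ = m + h := by linarith
  have hnode : h / √3 < h := div_lt_self hh (by simp [Real.lt_sqrt])
  have hnode_pos : 0 < h / √3 := by positivity
  have hleft : 0 ≤ √3 / 2 * h * P.derivative.eval (m - h / √3) :=
    mul_nonneg (by positivity)
      (derivative_eval_nonneg_of_monotoneOn hmono ⟨by linarith, by linarith⟩)
  have hright : 0 ≤ √3 / 2 * h * P.derivative.eval (m + h / √3) :=
    mul_nonneg (by positivity)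
      (derivative_eval_nonneg_of_monotoneOn hmono ⟨by linarith, by linarith⟩)
  rw [← left_half_increment_eq_of_natDegree_le_three hP] at hleft
  rw [← right_half_increment_eq_of_natDegree_le_three hP] at hright
  rw [hβ, ← h0, ← h1, hx₀, hx₁]
  constructor <;> linarith

/-- splitting at the midpoint divides the mass y₁ - y₀ into two
parts, each at most a (1-β) fraction of the total, where β = 1/2 - √3/4. -/
theorem stmt_9 (x₀ x₁ y₀ y₁ : ℝ) (hx : x₀ < x₁) (hy : y₀ ≤ y₁)
    (β : ℝ) (hβ : β = 1 / 2 - Real.sqrt 3 / 4)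
    (m : ℝ) (hm : m = (x₀ + x₁) / 2)
    (P : Polynomial ℝ) (hdeg : P.degree ≤ 3)
    (h0 : P.eval x₀ = y₀) (h1 : P.eval x₁ = y₁)
    (hmono : MonotoneOn (fun x => P.eval x) (Set.Icc x₀ x₁)) :
    P.eval m - y₀ ≤ (1 - β) * (y₁ - y₀) ∧
      y₁ - P.eval m ≤ (1 - β) * (y₁ - y₀) :=
  stmt_9_general x₀ x₁ y₀ y₁ hx β hβ m hm P hdeg h0 h1 hmono
end

section
/- Let β, M, b, b₁, b₂ be real numbers with 0 < β < 1/4, M > 0, b > M, b₁ ≥ 0, b₂ ≥ 0, b₁ + b₂ = b, b₁ ≤ (1 - β)·b, and b₂ ≤ (1 - β)·b. Then, with T = (3/4)·M, max(0, b₁ - T) + max(0, b₂ - T) ≤ (b - T) - β·M; that is, replacing a bucket of counter b exceeding M by the two split parts b₁, b₂ decreases the potential Σᵢ max(0, bᵢ - (3/4)M) by at least β·M. -/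
/-! Write `T = 3/4 · M`. The left-hand side is the largest of `0`, `b₁ - T`, `b₂ - T` and
`b - 2T`, so it suffices to bound each of these by `b - T - βM`: the first because
`βM < M/4 < b - T`, the middle two because `bᵢ ≤ b - βb ≤ b - βM`, and the last because
`βM < M/4 ≤ T`. -/

theorem max_zero_add_max_zero_le {α : Type*} [AddCommGroup α] [LinearOrder α]
    [IsOrderedAddMonoid α] {x y c : α} (h0 : 0 ≤ c) (hx : x ≤ c) (hy : y ≤ c)
    (hxy : x + y ≤ c) : max 0 x + max 0 y ≤ c := by
  rcases le_total x 0 with hx0 | hx0 <;> rcases le_total y 0 with hy0 | hy0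
  · simpa [max_eq_left hx0, max_eq_left hy0] using h0
  · simpa [max_eq_left hx0, max_eq_right hy0] using hy
  · simpa [max_eq_right hx0, max_eq_left hy0] using hx
  · simpa [max_eq_right hx0, max_eq_right hy0] using hxy

theorem stmt_11_general (β M b b₁ b₂ : ℝ) (hβ0 : 0 < β) (hβ1 : β < 1 / 4)
    (hM : 0 < M) (hb : M < b)
    (hsum : b₁ + b₂ = b) (h₁ : b₁ ≤ (1 - β) * b) (h₂ : b₂ ≤ (1 - β) * b) :
    max 0 (b₁ - 3 / 4 * M) + max 0 (b₂ - 3 / 4 * M)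
      ≤ (b - 3 / 4 * M) - β * M := by
  have hβb : β * M ≤ β * b := mul_le_mul_of_nonneg_left hb.le hβ0.le
  have hβM : β * M < 1 / 4 * M := mul_lt_mul_of_pos_right hβ1 hM
  apply max_zero_add_max_zero_le <;> linarith

/-- splitting a bucket of counter b > M into parts b₁, b₂, each at
most (1-β)·b, decreases the potential Σ max(0, bᵢ - (3/4)M) by at least β·M. -/
theorem stmt_11 (β M b b₁ b₂ : ℝ) (hβ0 : 0 < β) (hβ1 : β < 1 / 4)
    (hM : 0 < M) (hb : M < b) (hb₁ : 0 ≤ b₁) (hb₂ : 0 ≤ b₂)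
    (hsum : b₁ + b₂ = b) (h₁ : b₁ ≤ (1 - β) * b) (h₂ : b₂ ≤ (1 - β) * b) :
    max 0 (b₁ - 3 / 4 * M) + max 0 (b₂ - 3 / 4 * M)
      ≤ (b - 3 / 4 * M) - β * M :=
  stmt_11_general β M b b₁ b₂ hβ0 hβ1 hM hb hsum h₁ h₂
end

section
/- Let n ≥ k ≥ 2 be natural numbers, let a : {0, 1, …, n-1} → ℝ be a monotone non-decreasing sequence, let g = ⌊(n-1)/(k-1)⌋, and suppose every real value v is attained by a at most g indices, i.e., |{j : a(j) = v}| ≤ g for all v. Then the selected values a(⌊i·(n-1)/(k-1)⌋) for i = 0, 1, …, k-1 are strictly increasing in i; in particular the k selected thresholds are pairwise distinct. -/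
/-! A sorted sequence can only stay constant on a run of consecutive indices, so a value repeated
at two indices `p ≤ q` occurs at least `q - p + 1` times. Consecutive selected indices
`⌊i(n-1)/(k-1)⌋` and `⌊(i+1)(n-1)/(k-1)⌋` are at least `g = ⌊(n-1)/(k-1)⌋` apart, so equal values
there would occur more than `g` times. -/

open Finset

section

variable {α : Type*} [PartialOrder α] [DecidableEq α] {a : ℕ → α} {n : ℕ}

theorem Icc_subset_filter_eq_of_monotoneOn {p q : ℕ}
    (hmono : MonotoneOn a (Set.Iio n)) (hpq : p ≤ q) (hq : q < n) (heq : a p = a q) :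
    Icc p q ⊆ (range n).filter (fun j => a j = a p) := by
  intro j hj
  obtain ⟨hpj, hjq⟩ := mem_Icc.mp hj
  have hjn : j < n := by omega
  refine mem_filter.mpr ⟨mem_range.mpr hjn, le_antisymm ?_ ?_⟩
  · exact heq ▸ hmono hjn hq hjq
  · exact hmono (lt_of_le_of_lt hpq hq) hjn hpj

theorem lt_of_add_le_of_card_filter_eq_le {g p q : ℕ}
    (hmono : MonotoneOn a (Set.Iio n))
    (hfreq : ∀ v : α, ((range n).filter (fun j => a j = v)).card ≤ g)
    (hpq : p + g ≤ q) (hq : q < n) : a p < a q := by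
  refine lt_of_le_of_ne (hmono (by simp only [Set.mem_Iio]; omega) hq (by omega)) fun heq => ?_
  have hcard : q + 1 - p ≤ g := calc
    q + 1 - p = (Icc p q).card := (Nat.card_Icc p q).symm
    _ ≤ _ := card_le_card (Icc_subset_filter_eq_of_monotoneOn hmono (by omega) hq heq)
    _ ≤ g := hfreq (a p)
  omega

end

theorem mul_div_add_div_le_succ_mul_div (i m c : ℕ) : i * m / c + m / c ≤ (i + 1) * m / c := by
  simpa only [add_mul, one_mul] using (Nat.div_add_div_le_add_div (x := i * m) (y := m) (z := c))

theorem mul_div_le_right_of_le {i m c : ℕ} (hi : i ≤ c) : i * m / c ≤ m := by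
  rcases Nat.eq_zero_or_pos c with rfl | hc
  · simp
  · exact (Nat.div_le_div_right (Nat.mul_le_mul_right m hi)).trans_eq
      (Nat.mul_div_cancel_left m hc)

theorem stmt_13_general (n k : ℕ) (hn : k ≤ n) (a : ℕ → ℝ)
    (hmono : ∀ i j, i ≤ j → j < n → a i ≤ a j)
    (hfreq : ∀ v : ℝ, ((Finset.range n).filter (fun j => a j = v)).card
      ≤ (n - 1) / (k - 1)) :
    ∀ i₁ i₂, i₁ < i₂ → i₂ < k →
      a (i₁ * (n - 1) / (k - 1)) < a (i₂ * (n - 1) / (k - 1)) := by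
  have hmono' : MonotoneOn a (Set.Iio n) := fun i _ j hj hij => hmono i j hij hj
  have hstep : StrictMonoOn (fun i => a (i * (n - 1) / (k - 1))) (Set.Iio k) :=
    strictMonoOn_of_lt_add_one Set.ordConnected_Iio fun i _ _ hi => by
      have hik : i + 1 ≤ k - 1 := by simp only [Set.mem_Iio] at hi; omega
      exact lt_of_add_le_of_card_filter_eq_le hmono' hfreq (mul_div_add_div_le_succ_mul_div i _ _)
        ((mul_div_le_right_of_le hik).trans_lt (by omega))
  intro i₁ i₂ h12 h2k
  exact hstep (h12.trans h2k) h2k h12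

/-- if a is a sorted sequence of n reals in which no value occurs
more than g = ⌊(n-1)/(k-1)⌋ times, then the k thresholds a(⌊i(n-1)/(k-1)⌋),
i = 0,…,k-1, are strictly increasing, hence pairwise distinct. -/
theorem stmt_13 (n k : ℕ) (hk : 2 ≤ k) (hn : k ≤ n) (a : ℕ → ℝ)
    (hmono : ∀ i j, i ≤ j → j < n → a i ≤ a j)
    (hfreq : ∀ v : ℝ, ((Finset.range n).filter (fun j => a j = v)).card
      ≤ (n - 1) / (k - 1)) :
    ∀ i₁ i₂, i₁ < i₂ → i₂ < k →
      a (i₁ * (n - 1) / (k - 1)) < a (i₂ * (n - 1) / (k - 1)) :=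
  stmt_13_general n k hn a hmono hfreq
end
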